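/- arXiv:2102.07042 — 3 statements merged into one kernel-verified Lean document; each statement's English description precedes it below -/
import Mathlib

section
/- Every module over a von Neumann regular ring is flat. -/
/-!
In a von Neumann regular ring, the right ideal generated by finitely many elements `a i` contains
a left unit `e = ∑ i, a i * y i` for all of them, i.e. `e * a j = a j`. Given a relation
`∑ i, a i • m i = 0`, the matrix `b = 1 - y aᵀ` then satisfies `a b = a - e a = 0` and
`b m = m - y (∑ j, a j • m j) = m`, so one can take `m' = m`.
-/

open Finset MulOpposite

def IsVonNeumannRegular (A : Type*) [Ring A] : Prop :=
  ∀ x : A, ∃ y : A, x = x * y * x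

theorem mul_mem_span_mulOpposite {A : Type*} [Ring A] {S : Set A} {x : A}
    (hx : x ∈ Submodule.span Aᵐᵒᵖ S) (r : A) : x * r ∈ Submodule.span Aᵐᵒᵖ S := by
  simpa only [op_smul_eq_mul] using Submodule.smul_mem _ (op r) hx

namespace IsVonNeumannRegular

variable {A : Type*} [Ring A]

/-- If `e` is a left unit for `s` and `c = x - e x` is regular, `c = c z c`, then
`e + c z (1 - e)` is a left unit for `s ∪ {x}`. -/
theorem exists_left_unit_mem_span_image (hA : IsVonNeumannRegular A) {ι : Type*} (a : ι → A)
    (s : Finset ι) :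
    ∃ e ∈ Submodule.span Aᵐᵒᵖ (a '' s), ∀ i ∈ s, e * a i = a i := by
  classical
  induction s using Finset.induction_on with
  | empty => exact ⟨0, Submodule.zero_mem _, by simp⟩
  | insert i s _ ih =>
    obtain ⟨e, he, hunit⟩ := ih
    set c := a i - e * a i
    obtain ⟨z, hz⟩ := hA c
    have hspan : Submodule.span Aᵐᵒᵖ (a '' s) ≤ Submodule.span Aᵐᵒᵖ (a '' ↑(insert i s)) :=
      Submodule.span_mono (Set.image_mono (by simp))
    have hai : a i ∈ Submodule.span Aᵐᵒᵖ (a '' ↑(insert i s)) :=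
      Submodule.subset_span ⟨i, by simp, rfl⟩
    have hcmem : c ∈ Submodule.span Aᵐᵒᵖ (a '' ↑(insert i s)) :=
      Submodule.sub_mem _ hai (mul_mem_span_mulOpposite (hspan he) _)
    have hmul : ∀ w, (e + c * z * (1 - e)) * w = e * w + c * z * (w - e * w) := fun w => by
      noncomm_ring
    have hcz : c * z * (1 - e) ∈ Submodule.span Aᵐᵒᵖ (a '' ↑(insert i s)) :=
      mul_mem_span_mulOpposite (mul_mem_span_mulOpposite hcmem z) _
    refine ⟨e + c * z * (1 - e), Submodule.add_mem _ (hspan he) hcz, ?_⟩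
    intro j hj
    rcases Finset.mem_insert.mp hj with rfl | hj
    · rw [hmul, ← hz, add_sub_cancel]
    · rw [hmul, hunit j hj, sub_self, mul_zero, add_zero]

theorem exists_sum_mul_mul_eq_self (hA : IsVonNeumannRegular A) {ι : Type*} [Fintype ι]
    (a : ι → A) : ∃ y : ι → A, ∀ j, (∑ i, a i * y i) * a j = a j := by
  obtain ⟨e, he, hunit⟩ := hA.exists_left_unit_mem_span_image a univ
  rw [coe_univ, Set.image_univ, Submodule.mem_span_range_iff_exists_fun] at he
  obtain ⟨c, rfl⟩ := he
  exact ⟨fun i => unop (c i), fun j => by simpa [op_smul_eq_mul] using hunit j (mem_univ j)⟩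

theorem exists_matrix_of_sum_smul_eq_zero (hA : IsVonNeumannRegular A) {M : Type*}
    [AddCommGroup M] [Module A M] {ι : Type*} [Fintype ι] [DecidableEq ι] (a : ι → A)
    (m : ι → M) (h : ∑ i, a i • m i = 0) :
    ∃ b : Matrix ι ι A, (∀ j, ∑ i, a i * b i j = 0) ∧ ∀ i, m i = ∑ j, b i j • m j := by
  obtain ⟨y, hy⟩ := hA.exists_sum_mul_mul_eq_self a
  refine ⟨1 - Matrix.vecMulVec y a, fun j => ?_, fun i => ?_⟩
  · calc ∑ i, a i * (1 - Matrix.vecMulVec y a) i j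
        = a j - (∑ i, a i * y i) * a j := by
          simp [Matrix.one_apply, Matrix.vecMulVec_apply, mul_sub, Finset.sum_sub_distrib,
            Finset.sum_mul, mul_assoc]
      _ = 0 := by rw [hy, sub_self]
  · calc m i = m i - y i • ∑ j, a j • m j := by rw [h, smul_zero, sub_zero]
      _ = ∑ j, (1 - Matrix.vecMulVec y a) i j • m j := by
          simp [Matrix.one_apply, Matrix.vecMulVec_apply, sub_smul, Finset.sum_sub_distrib,
            Finset.smul_sum, mul_smul]

end IsVonNeumannRegular

/-- Every (left) module over a von Neumann regular ring is flat.  Since the ring is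
not assumed commutative, flatness is expressed via the standard equational
criterion (equivalent to tensoring with `M` preserving injectivity): every linear
relation `∑ aᵢ • mᵢ = 0` in `M` is a consequence of relations holding in the ring. -/
theorem stmt2 (A : Type*) [Ring A]
    (hreg : ∀ x : A, ∃ y : A, x = x * y * x)
    (M : Type*) [AddCommGroup M] [Module A M]
    (n : ℕ) (a : Fin n → A) (m : Fin n → M)
    (h : ∑ i, a i • m i = 0) :
    ∃ (k : ℕ) (b : Fin n → Fin k → A) (m' : Fin k → M),
      (∀ j, ∑ i, a i * b i j = 0) ∧ ∀ i, m i = ∑ j, b i j • m' j := by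
  obtain ⟨b, hab, hbm⟩ := IsVonNeumannRegular.exists_matrix_of_sum_smul_eq_zero hreg a m h
  exact ⟨n, b, m, hab, hbm⟩
end

section
/- Let M and N be injective right modules over a ring A such that M is isomorphic to a direct summand of N and N is isomorphic to a direct summand of M. Then M and N are isomorphic. -/
/-!
Splitting `N` along `r ∘ f = id` gives `N ≅ C × M` with `C = ker r`, and `g` embeds `C × M`
into `M`. Iterating this embedding places a copy of `C^(ℕ)` inside `M`. Its injective hull `H`
in `M` is a direct summand, and `C × H` is an injective hull of `C × C^(ℕ) ≅ C^(ℕ)`, so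
`H ≅ C × H`. Hence `M ≅ C × M ≅ N`.
-/

open LinearMap Function

universe v

theorem exists_le_maximal_disjoint {α : Type*} [CompleteLattice α] [IsCompactlyGenerated α]
    {a b : α} (h : Disjoint a b) : ∃ c, a ≤ c ∧ Maximal (Disjoint · b) c :=
  zorn_le_nonempty₀ {x | Disjoint x b}
    (fun _ hs hchain _ _ => ⟨_, hchain.directedOn.disjoint_sSup_left.2 fun _ hx => hs hx,
      fun _ hz => le_sSup hz⟩) a h

section Injective

variable {R : Type*} [Ring R] {M X : Type v} [AddCommGroup M] [Module R M]
  [AddCommGroup X] [Module R X]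

theorem Module.Injective.of_retract [Module.Injective R M] (i : X →ₗ[R] M) (p : M →ₗ[R] X)
    (h : p ∘ₗ i = LinearMap.id) : Module.Injective R X where
  out _ _ _ _ _ _ f hf g := by
    obtain ⟨k, hk⟩ := Module.Injective.out f hf (i ∘ₗ g)
    exact ⟨p ∘ₗ k, fun x => by simp [hk, ← comp_apply p i, h]⟩

instance Module.Injective.prod [Module.Injective R M] [Module.Injective R X] :
    Module.Injective R (M × X) where
  out _ _ _ _ _ _ f hf g := by
    obtain ⟨k₁, hk₁⟩ := Module.Injective.out f hf (fst R M X ∘ₗ g)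
    obtain ⟨k₂, hk₂⟩ := Module.Injective.out f hf (snd R M X ∘ₗ g)
    exact ⟨k₁.prod k₂, fun x => Prod.ext (hk₁ x) (hk₂ x)⟩

theorem Submodule.exists_isCompl_of_injective (H : Submodule R M) [Module.Injective R H] :
    ∃ K : Submodule R M, IsCompl H K := by
  obtain ⟨p, hp⟩ := Module.Injective.out H.subtype H.injective_subtype LinearMap.id
  exact ⟨ker p, isCompl_of_proj hp⟩

end Injective

namespace Submodule

variable {R : Type*} [Ring R] {M : Type v} [AddCommGroup M] [Module R M]

def IsEssential (W : Submodule R M) : Prop :=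
  ∀ N : Submodule R M, Disjoint N W → N = ⊥

theorem isEssential_map_mkQ {H K : Submodule R M} (hK : Maximal (Disjoint · H) K) :
    (H.map K.mkQ).IsEssential := by
  intro L hL
  have hKL : K ≤ L.comap K.mkQ := fun x hx => by
    simp [(Quotient.mk_eq_zero K).2 hx]
  have hLH : Disjoint (L.comap K.mkQ) H := disjoint_def.2 fun x hxL hxH =>
    disjoint_def.1 hK.prop x
      ((Quotient.mk_eq_zero K).1 (disjoint_def.1 hL _ hxL (mem_map_of_mem hxH))) hxH
  rw [← map_comap_eq_of_surjective K.mkQ_surjective L, hK.eq_of_ge hLH hKL, mkQ_map_self]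

theorem injective_of_maximal_disjoint [Module.Injective R M] {H K : Submodule R M}
    (hH : Maximal (Disjoint · K) H) (hK : Maximal (Disjoint · H) K) : Module.Injective R H := by
  have hq : Injective (K.mkQ ∘ₗ H.subtype) := by
    rw [← ker_eq_bot, ker_comp, ker_mkQ, ← disjoint_iff_comap_eq_bot]
    exact hH.prop
  -- `ψ` misses `K` because `H` is essential in `M ⧸ K`; so `range ψ = H` by maximality of `H`,
  -- and `ψ ∘ mkQ` is a retraction onto `H`.
  obtain ⟨ψ, hψ⟩ := Module.Injective.out _ hq H.subtype
  have hψK : Disjoint (range ψ) K := by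
    have : K.comap ψ = ⊥ := isEssential_map_mkQ hK _ <| disjoint_def.2 <| by
      rintro _ hx ⟨h, hh, rfl⟩
      have hψh : ψ (K.mkQ h) = h := hψ ⟨h, hh⟩
      rw [mem_comap, hψh] at hx
      simp [(Quotient.mk_eq_zero K).2 hx]
    rw [disjoint_def]
    rintro _ ⟨y, rfl⟩ hy
    rw [show y = 0 from (mem_bot R).1 (this ▸ hy), map_zero]
  have hψH : range ψ ≤ H := hH.le_of_ge hψK fun h hh => ⟨_, hψ ⟨h, hh⟩⟩
  refine .of_retract H.subtype ((ψ ∘ₗ K.mkQ).codRestrict H fun x => hψH ⟨_, rfl⟩) ?_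
  ext h
  exact hψ h

theorem exists_injective_hull [Module.Injective R M] (W : Submodule R M) :
    ∃ H : Submodule R M,
      W ≤ H ∧ Module.Injective R H ∧ (W.comap H.subtype).IsEssential := by
  obtain ⟨K, -, hK⟩ := exists_le_maximal_disjoint (disjoint_bot_left (a := W))
  obtain ⟨H, hWH, hH⟩ := exists_le_maximal_disjoint hK.prop.symm
  have hKH : Maximal (Disjoint · H) K :=
    ⟨hH.prop.symm, fun _ hK' hle => hK.le_of_ge (hK'.mono_right hWH) hle⟩
  refine ⟨H, hWH, injective_of_maximal_disjoint hH hKH, fun N hN => ?_⟩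
  set N' := N.map H.subtype
  have hN'H : N' ≤ H := map_subtype_le H N
  have hN'W : Disjoint N' W := by
    rw [disjoint_def]
    rintro _ ⟨n, hn, rfl⟩ hnW
    simpa using disjoint_def.1 hN n hn hnW
  have hdisj : Disjoint (N' ⊔ K) W := by
    have : (N' ⊔ K) ⊓ H = N' := by
      rw [sup_inf_assoc_of_le K hN'H, hKH.prop.eq_bot, sup_bot_eq]
    rw [disjoint_iff, ← inf_eq_right.2 hWH, ← inf_assoc, this, ← disjoint_iff]
    exact hN'W
  have hN'K : N' ≤ K := le_sup_left.trans (hK.le_of_ge hdisj le_sup_right)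
  have : N' = ⊥ := (hKH.prop.mono_left hN'K).eq_bot_of_le hN'H
  exact map_injective_of_injective H.injective_subtype (by rwa [map_bot])

theorem IsEssential.top_prod {E C : Type*} [AddCommGroup E] [Module R E] [AddCommGroup C]
    [Module R C] {W : Submodule R E} (hW : W.IsEssential) :
    ((⊤ : Submodule R C).prod W).IsEssential := by
  intro N hN
  have hsnd : N.map (LinearMap.snd R C E) = ⊥ := by
    refine hW _ (disjoint_def.2 ?_)
    rintro _ ⟨n, hn, rfl⟩ hnW
    exact congrArg Prod.snd (disjoint_def.1 hN n hn ⟨trivial, hnW⟩)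
  refine eq_bot_iff.2 fun n hn => disjoint_def.1 hN n hn ⟨trivial, ?_⟩
  rw [(mem_bot R).1 (hsnd ▸ mem_map_of_mem hn : n.2 ∈ (⊥ : Submodule R E))]
  exact W.zero_mem

end Submodule

section Hull

variable {R : Type*} [Ring R]

theorem nonempty_linearEquiv_of_isEssential {W E₁ E₂ : Type v} [AddCommGroup W] [Module R W]
    [AddCommGroup E₁] [Module R E₁] [AddCommGroup E₂] [Module R E₂]
    [Module.Injective R E₁] [Module.Injective R E₂] {u₁ : W →ₗ[R] E₁} {u₂ : W →ₗ[R] E₂}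
    (hu₁ : Injective u₁) (hu₂ : Injective u₂) (h₁ : (range u₁).IsEssential)
    (h₂ : (range u₂).IsEssential) : Nonempty (E₁ ≃ₗ[R] E₂) := by
  obtain ⟨θ, hθ⟩ := Module.Injective.out u₁ hu₁ u₂
  have hθ_inj : Injective θ := by
    rw [← ker_eq_bot]
    refine h₁ _ (Submodule.disjoint_def.2 ?_)
    rintro _ hx ⟨w, rfl⟩
    rw [mem_ker, hθ] at hx
    rw [hu₂ (hx.trans u₂.map_zero.symm), map_zero]
  let e := LinearEquiv.ofInjective θ hθ_inj
  have : Module.Injective R (range θ) :=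
    .of_retract e.symm.toLinearMap e.toLinearMap (by ext; simp)
  obtain ⟨K, hK⟩ := (range θ).exists_isCompl_of_injective
  have hu₂θ : range u₂ ≤ range θ := by
    rintro _ ⟨w, rfl⟩
    exact ⟨u₁ w, hθ w⟩
  have hK_bot : K = ⊥ := h₂ K (hK.disjoint.symm.mono_right hu₂θ)
  have hθ_surj : range θ = ⊤ := codisjoint_bot.1 (hK_bot ▸ hK.codisjoint)
  exact ⟨.ofBijective θ ⟨hθ_inj, range_eq_top.1 hθ_surj⟩⟩

noncomputable def Finsupp.natLEquivProd (C : Type*) [AddCommGroup C] [Module R C] :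
    (ℕ →₀ C) ≃ₗ[R] C × (ℕ →₀ C) :=
  Finsupp.domLCongr Equiv.natEquivNatSumPUnit.{1} ≪≫ₗ
    Finsupp.sumFinsuppLEquivProdFinsupp R ≪≫ₗ
    (LinearEquiv.refl R _).prodCongr (Finsupp.uniqueLinearEquiv R C PUnit.unit) ≪≫ₗ
    LinearEquiv.prodComm R _ _

theorem nonempty_linearEquiv_prod_of_prod_injective {M C : Type v} [AddCommGroup M]
    [Module R M] [AddCommGroup C] [Module R C] [Module.Injective R M] [Module.Injective R C]
    (i : C × M →ₗ[R] M) (hi : Injective i) : Nonempty (M ≃ₗ[R] C × M) := by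
  obtain ⟨g, hg⟩ := exists_finsupp_nat_of_prod_injective hi
  obtain ⟨H, hgH, hH, hess⟩ := (range g).exists_injective_hull
  obtain ⟨K, hHK⟩ := H.exists_isCompl_of_injective
  let u : (ℕ →₀ C) →ₗ[R] H := g.codRestrict H fun w => hgH ⟨w, rfl⟩
  have hu : Injective u := fun _ _ h => hg (congrArg Subtype.val h)
  have hu_ess : (range u).IsEssential := by rwa [range_codRestrict]
  -- `C × H` is an injective hull of `C × (ℕ →₀ C) ≅ ℕ →₀ C`.
  let u' : (ℕ →₀ C) →ₗ[R] C × H :=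
    LinearMap.id.prodMap u ∘ₗ (Finsupp.natLEquivProd C).toLinearMap
  have hu' : Injective u' :=
    (Prod.map_injective.2 ⟨injective_id, hu⟩).comp (LinearEquiv.injective _)
  have hu'_ess : (range u').IsEssential := by
    rw [range_comp_of_range_eq_top _ (LinearEquiv.range _), range_prodMap, range_id]
    exact hu_ess.top_prod
  obtain ⟨e⟩ := nonempty_linearEquiv_of_isEssential hu hu' hu_ess hu'_ess
  let eM := Submodule.prodEquivOfIsCompl H K hHK
  exact ⟨eM.symm ≪≫ₗ e.prodCongr (.refl R K) ≪≫ₗ .prodAssoc R C H K ≪≫ₗ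
    (LinearEquiv.refl R C).prodCongr eM⟩

theorem nonempty_linearEquiv_prod_of_retract {M : Type v} {X : Type*} [AddCommGroup M]
    [Module R M] [AddCommGroup X] [Module R X] [Module.Injective R M] (i : X × M →ₗ[R] M)
    (hi : Injective i) (p : M →ₗ[R] X) (hp : p ∘ₗ i ∘ₗ inl R X M = LinearMap.id) :
    Nonempty (M ≃ₗ[R] X × M) := by
  -- Injectivity only tests modules in its own universe, so `X` is replaced by its copy in `M`.
  let j := i ∘ₗ inl R X M
  let eX := LinearEquiv.ofInjective j (hi.comp inl_injective)
  have : Module.Injective R (range j) := by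
    refine .of_retract (range j).subtype (j.rangeRestrict ∘ₗ p) ?_
    ext ⟨_, x, rfl⟩
    exact congrArg j (LinearMap.congr_fun hp x)
  obtain ⟨e⟩ := nonempty_linearEquiv_prod_of_prod_injective
    (i ∘ₗ eX.symm.toLinearMap.prodMap LinearMap.id)
    (hi.comp (Prod.map_injective.2 ⟨eX.symm.injective, injective_id⟩))
  exact ⟨e ≪≫ₗ eX.symm.prodCongr (.refl R M)⟩

end Hull

theorem stmt13_general (A : Type*) [Ring A]
    (M N : Type*) [AddCommGroup M] [AddCommGroup N]
    [Module Aᵐᵒᵖ M] [Module Aᵐᵒᵖ N]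
    (hM : Module.Injective Aᵐᵒᵖ M)
    (hMN : ∃ (f : M →ₗ[Aᵐᵒᵖ] N) (r : N →ₗ[Aᵐᵒᵖ] M), r ∘ₗ f = LinearMap.id)
    (hNM : ∃ (g : N →ₗ[Aᵐᵒᵖ] M) (s : M →ₗ[Aᵐᵒᵖ] N), s ∘ₗ g = LinearMap.id) :
    Nonempty (M ≃ₗ[Aᵐᵒᵖ] N) := by
  obtain ⟨f, r, hrf⟩ := hMN
  obtain ⟨g, s, hsg⟩ := hNM
  obtain ⟨e, -⟩ :=
    r.exact_subtype_ker_map.splitSurjectiveEquiv (ker r).injective_subtype ⟨f, hrf⟩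
  have hsg' : ∀ n, s (g n) = n := LinearMap.congr_fun hsg
  obtain ⟨φ⟩ := nonempty_linearEquiv_prod_of_retract (g ∘ₗ e.symm.toLinearMap)
    ((LeftInverse.injective hsg').comp e.symm.injective) (fst _ _ _ ∘ₗ e.toLinearMap ∘ₗ s)
    (by ext; simp [hsg'])
  exact ⟨φ ≪≫ₗ e.symm⟩

/-- Two injective right `A`-modules (modules over `Aᵐᵒᵖ`), each isomorphic to a
direct summand of the other, are isomorphic.  Being (isomorphic to) a direct
summand is expressed by a split monomorphism. -/
theorem stmt13 (A : Type*) [Ring A]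
    (M N : Type*) [AddCommGroup M] [AddCommGroup N]
    [Module Aᵐᵒᵖ M] [Module Aᵐᵒᵖ N]
    (hM : Module.Injective Aᵐᵒᵖ M) (hN : Module.Injective Aᵐᵒᵖ N)
    (hMN : ∃ (f : M →ₗ[Aᵐᵒᵖ] N) (r : N →ₗ[Aᵐᵒᵖ] M), r ∘ₗ f = LinearMap.id)
    (hNM : ∃ (g : N →ₗ[Aᵐᵒᵖ] M) (s : M →ₗ[Aᵐᵒᵖ] N), s ∘ₗ g = LinearMap.id) :
    Nonempty (M ≃ₗ[Aᵐᵒᵖ] N) :=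
  stmt13_general A M N hM hMN hNM
end

section
/- Let M be a nonzero injective right module over a ring A such that every nonzero submodule of M is isomorphic to M. Then the endomorphism ring End_A(M) is a simple ring. -/
/-!
Let `I` be a nonzero two-sided ideal of `End_A(M)` and `0 ≠ f ∈ I`. If `ker f ≠ 0`, then
`ker f ≅ M` is injective, hence a direct summand `M = ker f ⊕ N` with `N ≠ 0`; composing `f`
with an isomorphism `M ≅ N` gives an injective element of `I`. By injectivity of `M`, an
injective endomorphism of `M` has a left inverse, so `1 ∈ I`.
-/

namespace Module.Injective

universe u v

variable {R : Type u} {M : Type v} [Ring R] [AddCommGroup M] [Module R M] [Module.Injective R M]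

theorem exists_leftInverse_of_injective {Y : Type v} [AddCommGroup Y] [Module R Y]
    {f : M →ₗ[R] Y} (hf : Function.Injective f) : ∃ g : Y →ₗ[R] M, g ∘ₗ f = LinearMap.id := by
  obtain ⟨g, hg⟩ := Module.Injective.out f hf LinearMap.id
  exact ⟨g, LinearMap.ext hg⟩

theorem exists_isCompl_of_equiv {K : Submodule R M} (e : K ≃ₗ[R] M) :
    ∃ N : Submodule R M, IsCompl K N := by
  obtain ⟨h, hh⟩ := Module.Injective.out K.subtype K.injective_subtype e.toLinearMap
  exact ⟨_, LinearMap.isCompl_of_proj (f := e.symm.toLinearMap ∘ₗ h) fun x => by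
    simpa using congrArg e.symm (hh x)⟩

theorem exists_injective_mul_of_ne_zero
    (hsub : ∀ N : Submodule R M, N ≠ ⊥ → Nonempty (N ≃ₗ[R] M))
    {f : Module.End R M} (hf : f ≠ 0) : ∃ h : Module.End R M, Function.Injective (f * h) := by
  by_cases hK : LinearMap.ker f = ⊥
  · exact ⟨1, LinearMap.ker_eq_bot.mp hK⟩
  obtain ⟨e⟩ := hsub _ hK
  obtain ⟨N, hKN⟩ := exists_isCompl_of_equiv e
  have hN : N ≠ ⊥ := by
    rintro rfl
    exact hf (LinearMap.ker_eq_top.mp (eq_top_of_isCompl_bot hKN))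
  obtain ⟨α⟩ := hsub N hN
  have hfN : Function.Injective (f.domRestrict N) :=
    LinearMap.injective_domRestrict_iff.mpr hKN.disjoint.symm
  exact ⟨N.subtype ∘ₗ α.symm.toLinearMap, hfN.comp α.symm.injective⟩

end Module.Injective

open Module.Injective in
/-- If `M` is a nonzero injective right `A`-module (a module over `Aᵐᵒᵖ`) all of
whose nonzero submodules are isomorphic to `M`, then `End_A(M)` is a simple ring. -/
theorem stmt16 (A : Type*) [Ring A]
    (M : Type*) [AddCommGroup M] [Module Aᵐᵒᵖ M] [Nontrivial M]
    (hM : Module.Injective Aᵐᵒᵖ M)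
    (hsub : ∀ N : Submodule Aᵐᵒᵖ M, N ≠ ⊥ → Nonempty (N ≃ₗ[Aᵐᵒᵖ] M)) :
    IsSimpleRing (Module.End Aᵐᵒᵖ M) := by
  refine .of_eq_bot_or_eq_top fun I => or_iff_not_imp_left.mpr fun hI => I.one_mem_iff.mp ?_
  obtain ⟨f, hfI, hf : f ≠ 0⟩ := SetLike.exists_of_lt (bot_lt_iff_ne_bot.mpr hI)
  obtain ⟨h, hinj⟩ := exists_injective_mul_of_ne_zero hsub hf
  obtain ⟨g, hg⟩ := exists_leftInverse_of_injective hinj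
  have hg' : g * (f * h) = 1 := hg
  exact hg' ▸ I.mul_mem_left g _ (I.mul_mem_right f h hfI)
end
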